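/- Let G be a Class 2 graph with critical edge e₁ = xy₁, φ a proper Δ-edge-coloring of G − e₁, and F = (x, e₁, y₁, …, e_p, y_p) a multi-fan at x. If α ∈ φ̄(x) and β ∈ φ̄(y_i) for some 1 ≤ i ≤ p, then x and y_i are (α,β)-linked, i.e., the (α,β)-chain containing x is a path with endvertices x and y_i. -/

import Mathlib

open SimpleGraph

/-- A proper `k`-edge-coloring of `G` with colors in `{1,…,k}`: every edge receives a color
in `{1,…,k}` and distinct edges sharing a vertex receive distinct colors. -/
def IsProperEdgeColoring {V : Type*} (G : SimpleGraph V) (k : ℕ) (c : Sym2 V → ℕ) : Prop :=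
  (∀ e ∈ G.edgeSet, c e ∈ Finset.Icc 1 k) ∧
  ∀ e ∈ G.edgeSet, ∀ f ∈ G.edgeSet, e ≠ f → (∃ v, v ∈ e ∧ v ∈ f) → c e ≠ c f

/-- `G` admits a proper `k`-edge-coloring. -/
def EdgeColorable {V : Type*} (G : SimpleGraph V) (k : ℕ) : Prop :=
  ∃ c, IsProperEdgeColoring G k c

/-- The chromatic index of `G`: the least `k` such that `G` is `k`-edge-colorable. -/
noncomputable def chromIndex {V : Type*} (G : SimpleGraph V) : ℕ :=
  sInf {k | EdgeColorable G k}


/-- The set of colors of `{1,…,k}` missing at `v` under the coloring `c`, i.e. not assigned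
to any edge of `G` incident with `v`. -/
def missing {V : Type*} (G : SimpleGraph V) (k : ℕ) (c : Sym2 V → ℕ) (v : V) : Set ℕ :=
  {α | α ∈ Finset.Icc 1 k ∧ ¬ ∃ u, G.Adj v u ∧ c s(v, u) = α}


/-- The spanning subgraph of `G` whose edges are those colored `α` or `β` by `c`;
its connected components are the `(α,β)`-chains. -/
def chainGraph {V : Type*} (G : SimpleGraph V) (c : Sym2 V → ℕ) (α β : ℕ) :
    SimpleGraph V where
  Adj u v := G.Adj u v ∧ (c s(u, v) = α ∨ c s(u, v) = β)
  symm := by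
    constructor
    intro u v h
    refine ⟨h.1.symm, ?_⟩
    rw [Sym2.eq_swap]
    exact h.2
  loopless := ⟨fun v h => G.loopless.1 v h.1⟩


/-- `u` and `v` are `(α,β)`-linked: the `(α,β)`-chain containing `u` is a path with
endvertices `u` and `v` (equivalently, since chains have maximum degree two: `u` and `v` are
distinct, lie on a common chain, and each has degree at most one in the chain subgraph). -/
def Linked {V : Type*} (G : SimpleGraph V) (c : Sym2 V → ℕ) (α β : ℕ) (u v : V) : Prop :=
  u ≠ v ∧ (chainGraph G c α β).Reachable u v ∧
    {w | (chainGraph G c α β).Adj u w}.ncard ≤ 1 ∧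
    {w | (chainGraph G c α β).Adj v w}.ncard ≤ 1

/-! If `α ∈ φ̄(x)` and `β ∈ φ̄(y_i)`, both ends have at most one `(α,β)`-edge, so only
reachability is at stake. Were `y_i` not on the chain through `x`, swapping `α` and `β` on the
chain through `y_i` would leave the fan edges at `x` alone and make `α` missing at both `x` and
`y_i`. The swapped colouring is still a multi-fan colouring: a fan edge coloured `β` points at
some `y_j`, `j < i`, missing `β`, which by induction on `i` lies on the chain through `x` and so
is untouched. But no colour is missing at both `x` and a fan vertex `y_i`: recolouring `e_i` with
it frees `φ(e_i)` at `x`, while `φ(e_i)` is missing at an earlier `y_j`; descending to `y₁`, the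
edge `e₁` gets coloured, and `G` would be `Δ`-edge-colourable. -/

open Function

namespace IsProperEdgeColoring

variable {V : Type*} {H K : SimpleGraph V} {k : ℕ} {c : Sym2 V → ℕ}

theorem of_adj (hmem : ∀ e ∈ H.edgeSet, c e ∈ Finset.Icc 1 k)
    (hne : ∀ w a b, H.Adj w a → H.Adj w b → a ≠ b → c s(w, a) ≠ c s(w, b)) :
    IsProperEdgeColoring H k c := by
  refine ⟨hmem, fun e he f hf hef ⟨w, hwe, hwf⟩ => ?_⟩
  obtain ⟨a, rfl⟩ := Sym2.mem_iff_exists.1 hwe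
  obtain ⟨b, rfl⟩ := Sym2.mem_iff_exists.1 hwf
  exact hne w a b he hf fun hab => hef (hab ▸ rfl)

theorem ne_of_adj (hc : IsProperEdgeColoring H k c) {w a b : V} (ha : H.Adj w a)
    (hb : H.Adj w b) (hab : a ≠ b) : c s(w, a) ≠ c s(w, b) :=
  hc.2 _ ha _ hb (fun h => hab (Sym2.congr_right.1 h))
    ⟨w, Sym2.mem_mk_left w a, Sym2.mem_mk_left w b⟩

theorem mono (hc : IsProperEdgeColoring H k c) (hKH : K ≤ H) : IsProperEdgeColoring K k c :=
  of_adj (fun e he => hc.1 e (edgeSet_mono hKH he))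
    fun _ _ _ ha hb hab => hc.ne_of_adj (hKH ha) (hKH hb) hab

end IsProperEdgeColoring

section Missing

variable {V : Type*} {H K : SimpleGraph V} {k : ℕ} {c d : Sym2 V → ℕ} {v u : V} {γ : ℕ}

theorem ne_of_mem_missing (hγ : γ ∈ missing H k c v) (hu : H.Adj v u) : c s(v, u) ≠ γ :=
  fun h => hγ.2 ⟨u, hu, h⟩

theorem mem_missing_of_forall_ne (hγ : γ ∈ Finset.Icc 1 k)
    (h : ∀ u, H.Adj v u → c s(v, u) ≠ γ) : γ ∈ missing H k c v :=
  ⟨hγ, fun ⟨u, hu, he⟩ => h u hu he⟩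

theorem missing_anti (hKH : K ≤ H) : missing H k c v ⊆ missing K k c v :=
  fun _ hγ => mem_missing_of_forall_ne hγ.1 fun _ hu => ne_of_mem_missing hγ (hKH hu)

theorem missing_congr (h : ∀ u, H.Adj v u → c s(v, u) = d s(v, u)) :
    missing H k c v = missing H k d v := by
  ext γ
  exact ⟨fun hγ => mem_missing_of_forall_ne hγ.1 fun u hu => h u hu ▸ ne_of_mem_missing hγ hu,
    fun hγ => mem_missing_of_forall_ne hγ.1 fun u hu => (h u hu).symm ▸ ne_of_mem_missing hγ hu⟩

end Missing

section Recolor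

variable {V : Type*} [DecidableEq V] {H K : SimpleGraph V} {k : ℕ} {d : Sym2 V → ℕ} {a b v : V}
  {γ : ℕ}

theorem missing_update_of_notMem {e : Sym2 V} (hv : v ∉ e) :
    missing H k (update d e γ) v = missing H k d v :=
  missing_congr fun u _ => update_of_ne (fun h => hv (by rw [← h]; exact Sym2.mem_mk_left v u)) _ _

theorem IsProperEdgeColoring.update (hd : IsProperEdgeColoring (K.deleteEdges {s(a, b)}) k d)
    (hab : K.Adj a b) (hγa : γ ∈ missing (K.deleteEdges {s(a, b)}) k d a)
    (hγb : γ ∈ missing (K.deleteEdges {s(a, b)}) k d b) :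
    IsProperEdgeColoring K k (Function.update d s(a, b) γ) := by
  have hdel : ∀ {w u}, K.Adj w u → s(w, u) ≠ s(a, b) → (K.deleteEdges {s(a, b)}).Adj w u :=
    fun hwu hne => deleteEdges_adj.2 ⟨hwu, hne⟩
  have hfree : ∀ {w u₁ u₂}, K.Adj w u₂ → u₁ ≠ u₂ → s(w, u₁) = s(a, b) →
      Function.update d s(a, b) γ s(w, u₂) ≠ γ := by
    intro w u₁ u₂ hu₂ hne h₁
    have h₂ : s(w, u₂) ≠ s(a, b) := fun h₂ => hne (Sym2.congr_right.1 (h₁.trans h₂.symm))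
    rw [update_of_ne h₂]
    rcases Sym2.mem_iff.1 (h₁ ▸ Sym2.mem_mk_left w u₁) with rfl | rfl
    · exact ne_of_mem_missing hγa (hdel hu₂ h₂)
    · exact ne_of_mem_missing hγb (hdel hu₂ h₂)
  refine IsProperEdgeColoring.of_adj (fun e he => ?_) fun w u₁ u₂ hu₁ hu₂ hne => ?_
  · by_cases h : e = s(a, b)
    · rw [h, update_self]
      exact hγa.1
    · rw [update_of_ne h]
      exact hd.1 e (by rw [edgeSet_deleteEdges]; exact ⟨he, h⟩)
  · by_cases h₁ : s(w, u₁) = s(a, b)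
    · rw [h₁, update_self]
      exact (hfree hu₂ hne h₁).symm
    by_cases h₂ : s(w, u₂) = s(a, b)
    · rw [h₂, update_self]
      exact hfree hu₁ hne.symm h₂
    rw [update_of_ne h₁, update_of_ne h₂]
    exact hd.ne_of_adj (hdel hu₁ h₁) (hdel hu₂ h₂) hne

theorem apply_mem_missing_update (hd : IsProperEdgeColoring H k d) (hab : H.Adj a b)
    (hγ : γ ∈ missing H k d a) : d s(a, b) ∈ missing H k (update d s(a, b) γ) a := by
  refine mem_missing_of_forall_ne (hd.1 _ hab) fun u hu => ?_
  by_cases hub : u = b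
  · subst hub
    rw [update_self]
    exact (ne_of_mem_missing hγ hu).symm
  · rw [update_of_ne fun h => hub (Sym2.congr_right.1 h)]
    exact hd.ne_of_adj hu hab hub

end Recolor

section Kempe

variable {V : Type*} {H : SimpleGraph V} {k : ℕ} {c : Sym2 V → ℕ} {α β : ℕ} {v w u : V}

/-- The Kempe change at `v`: swap `α` and `β` on the `(α,β)`-chain through `v`. It is applied to
every edge with an end on that chain, which is harmless because `Equiv.swap α β` fixes the
colours of the edges leaving the chain. -/
noncomputable def kempeSwap (H : SimpleGraph V) (c : Sym2 V → ℕ) (α β : ℕ) (v : V) :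
    Sym2 V → ℕ :=
  open Classical in
  fun e => if ∃ w ∈ e, (chainGraph H c α β).Reachable v w then Equiv.swap α β (c e) else c e

theorem kempeSwap_of_reachable (hw : (chainGraph H c α β).Reachable v w) :
    kempeSwap H c α β v s(w, u) = Equiv.swap α β (c s(w, u)) :=
  if_pos ⟨w, Sym2.mem_mk_left w u, hw⟩

theorem kempeSwap_of_not_reachable (hw : ¬ (chainGraph H c α β).Reachable v w)
    (hu : H.Adj w u) : kempeSwap H c α β v s(w, u) = c s(w, u) := by
  unfold kempeSwap
  split_ifs with h
  · obtain ⟨w', hw', hvw'⟩ := h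
    rcases Sym2.mem_iff.1 hw' with rfl | rfl
    · exact absurd hvw' hw
    · refine Equiv.swap_apply_of_ne_of_ne (fun hα => hw ?_) (fun hβ => hw ?_)
      · exact hvw'.trans (Adj.reachable ⟨hu.symm, Or.inl (Sym2.eq_swap ▸ hα)⟩)
      · exact hvw'.trans (Adj.reachable ⟨hu.symm, Or.inr (Sym2.eq_swap ▸ hβ)⟩)
  · rfl

theorem IsProperEdgeColoring.kempeSwap (hc : IsProperEdgeColoring H k c)
    (hα : α ∈ Finset.Icc 1 k) (hβ : β ∈ Finset.Icc 1 k) :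
    IsProperEdgeColoring H k (kempeSwap H c α β v) := by
  refine IsProperEdgeColoring.of_adj (fun e he => ?_) fun w a b ha hb hab => ?_
  · have hce := hc.1 e he
    unfold _root_.kempeSwap
    split_ifs
    · rw [Equiv.swap_apply_def]
      split_ifs <;> assumption
    · exact hce
  · by_cases hw : (chainGraph H c α β).Reachable v w
    · rw [kempeSwap_of_reachable hw, kempeSwap_of_reachable hw]
      exact (Equiv.injective _).ne (hc.ne_of_adj ha hb hab)
    · rw [kempeSwap_of_not_reachable hw ha, kempeSwap_of_not_reachable hw hb]
      exact hc.ne_of_adj ha hb hab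

theorem missing_kempeSwap_of_not_reachable (hw : ¬ (chainGraph H c α β).Reachable v w) :
    missing H k (kempeSwap H c α β v) w = missing H k c w :=
  missing_congr fun _ hu => kempeSwap_of_not_reachable hw hu

theorem swap_mem_missing_kempeSwap (hw : (chainGraph H c α β).Reachable v w) {δ : ℕ}
    (hδ : δ ∈ missing H k c w) (hswap : Equiv.swap α β δ ∈ Finset.Icc 1 k) :
    Equiv.swap α β δ ∈ missing H k (kempeSwap H c α β v) w :=
  mem_missing_of_forall_ne hswap fun u hu => by
    rw [kempeSwap_of_reachable hw]
    exact (Equiv.injective _).ne (ne_of_mem_missing hδ hu)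

theorem mem_missing_kempeSwap_of_ne {δ : ℕ} (hδα : δ ≠ α) (hδβ : δ ≠ β)
    (hδ : δ ∈ missing H k c w) : δ ∈ missing H k (kempeSwap H c α β v) w := by
  by_cases hw : (chainGraph H c α β).Reachable v w
  · have hfix := Equiv.swap_apply_of_ne_of_ne hδα hδβ
    simpa only [hfix] using swap_mem_missing_kempeSwap hw hδ (by rw [hfix]; exact hδ.1)
  · rwa [missing_kempeSwap_of_not_reachable hw]

end Kempe

theorem ncard_chainGraph_adj_le_one {V : Type*} {H : SimpleGraph V} {k : ℕ} {c : Sym2 V → ℕ}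
    {α β : ℕ} {v : V} (hc : IsProperEdgeColoring H k c)
    (hv : α ∈ missing H k c v ∨ β ∈ missing H k c v) :
    {w | (chainGraph H c α β).Adj v w}.ncard ≤ 1 := by
  have hsub : {w | (chainGraph H c α β).Adj v w}.Subsingleton := by
    intro a ha b hb
    by_contra hab
    have hne := hc.ne_of_adj ha.1 hb.1 hab
    have hαβa := ha.2
    have hαβb := hb.2
    rcases hv with hv | hv <;>
    · have := ne_of_mem_missing hv ha.1
      have := ne_of_mem_missing hv hb.1
      omega
  exact (Set.ncard_le_one_iff hsub.finite).2 fun ha hb => hsub ha hb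

theorem chromIndex_le {V : Type*} {G : SimpleGraph V} {k : ℕ} (h : EdgeColorable G k) :
    chromIndex G ≤ k :=
  Nat.sInf_le h

section MultiFan

variable {V : Type*} {G : SimpleGraph V} {k : ℕ} {x : V} {p : ℕ} {y : Fin (p + 1) → V}

/-- Indices start at `0`: `y 0` is the `y₁` of the paper. -/
def IsMultiFanUpTo (H : SimpleGraph V) (k : ℕ) (c : Sym2 V → ℕ) (x : V) (y : Fin (p + 1) → V)
    (m : Fin (p + 1)) : Prop :=
  ∀ i ≤ m, 0 < (i : ℕ) → ∃ j < i, c s(x, y i) ∈ missing H k c (y j)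

theorem adj_deleteEdges_of_pos (hadj : ∀ i, G.Adj x (y i)) (hinj : Injective y)
    {i : Fin (p + 1)} (hi : 0 < (i : ℕ)) : (G.deleteEdges {s(x, y 0)}).Adj x (y i) :=
  deleteEdges_adj.2 ⟨hadj i, fun h => by
    rw [hinj (Sym2.congr_right.1 (Set.mem_singleton_iff.1 h))] at hi
    exact hi.ne rfl⟩

theorem edgeColorable_of_mem_missing_fan [DecidableEq V] (hadj : ∀ i, G.Adj x (y i))
    (hinj : Injective y) (i : Fin (p + 1)) (d : Sym2 V → ℕ)
    (hd : IsProperEdgeColoring (G.deleteEdges {s(x, y 0)}) k d)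
    (hfan : IsMultiFanUpTo (G.deleteEdges {s(x, y 0)}) k d x y i) (γ : ℕ)
    (hγx : γ ∈ missing (G.deleteEdges {s(x, y 0)}) k d x)
    (hγi : γ ∈ missing (G.deleteEdges {s(x, y 0)}) k d (y i)) : EdgeColorable G k := by
  induction i using WellFoundedLT.induction generalizing d γ with
  | _ i IH =>
  rcases Nat.eq_zero_or_pos (i : ℕ) with hi | hi
  · obtain rfl : i = 0 := Fin.ext hi
    exact ⟨_, hd.update (hadj 0) hγx hγi⟩
  obtain ⟨j, hji, hδj⟩ := hfan i le_rfl hi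
  have hxi := adj_deleteEdges_of_pos hadj hinj hi
  have hne : ∀ l < i, y l ≠ y i := fun l hl => hinj.ne hl.ne
  have hnotMem : ∀ l < i, y l ∉ s(x, y i) := fun l hl h =>
    (Sym2.mem_iff.1 h).elim (hadj l).ne' (hne l hl)
  have hd' := (hd.mono (deleteEdges_le {s(x, y i)})).update hxi
    (missing_anti (deleteEdges_le _) hγx) (missing_anti (deleteEdges_le _) hγi)
  refine IH j hji _ hd' (fun l hlj hl => ?_) _ (apply_mem_missing_update hd hxi hγx)
    (by rwa [missing_update_of_notMem (hnotMem j hji)])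
  obtain ⟨j', hj'l, hm⟩ := hfan l (hlj.trans hji.le) hl
  have hli := hlj.trans_lt hji
  refine ⟨j', hj'l, ?_⟩
  rwa [update_of_ne fun h => hne l hli (Sym2.congr_right.1 h),
    missing_update_of_notMem (hnotMem j' (hj'l.trans hli))]

theorem reachable_chainGraph_of_multiFan (hG : ¬ EdgeColorable G k)
    (hadj : ∀ i, G.Adj x (y i)) (hinj : Injective y) {c : Sym2 V → ℕ}
    (hc : IsProperEdgeColoring (G.deleteEdges {s(x, y 0)}) k c)
    (hfan : IsMultiFanUpTo (G.deleteEdges {s(x, y 0)}) k c x y (Fin.last p)) {α β : ℕ}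
    (hα : α ∈ missing (G.deleteEdges {s(x, y 0)}) k c x) (i : Fin (p + 1))
    (hβ : β ∈ missing (G.deleteEdges {s(x, y 0)}) k c (y i)) :
    (chainGraph (G.deleteEdges {s(x, y 0)}) c α β).Reachable x (y i) := by
  classical
  induction i using WellFoundedLT.induction with
  | _ i IH =>
  by_contra hxi
  have hix : ¬ (chainGraph _ c α β).Reachable (y i) x := fun h => hxi h.symm
  refine hG (edgeColorable_of_mem_missing_fan hadj hinj i _ (hc.kempeSwap (v := y i) hα.1 hβ.1)
    (fun l hli hl => ?_) α ?_ ?_)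
  · obtain ⟨j, hjl, hm⟩ := hfan l (Fin.le_last l) hl
    have hxl := adj_deleteEdges_of_pos hadj hinj hl
    refine ⟨j, hjl, ?_⟩
    rw [kempeSwap_of_not_reachable hix hxl]
    by_cases hβl : c s(x, y l) = β
    · have hxj := IH j (hjl.trans_le hli) (hβl ▸ hm)
      rwa [missing_kempeSwap_of_not_reachable fun h => hix (h.trans hxj.symm)]
    · exact mem_missing_kempeSwap_of_ne (ne_of_mem_missing hα hxl) hβl hm
  · rwa [missing_kempeSwap_of_not_reachable hix]
  · have h := swap_mem_missing_kempeSwap (α := α) (Reachable.refl (y i)) hβ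
      (by rw [Equiv.swap_apply_right]; exact hα.1)
    rwa [Equiv.swap_apply_right] at h

end MultiFan

theorem stmt_7_general {V : Type*} [Fintype V] (G : SimpleGraph V) [DecidableRel G.Adj]
    (hclass2 : chromIndex G = G.maxDegree + 1) (x : V) (p : ℕ) (y : Fin (p + 1) → V)
    (hadj : ∀ i, G.Adj x (y i)) (hinj : Function.Injective y)
    (c : Sym2 V → ℕ)
    (hc : IsProperEdgeColoring (G.deleteEdges {s(x, y 0)}) G.maxDegree c)
    (hfan : ∀ i : Fin (p + 1), 0 < (i : ℕ) → ∃ j : Fin (p + 1), (j : ℕ) < (i : ℕ) ∧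
      c s(x, y i) ∈ missing (G.deleteEdges {s(x, y 0)}) G.maxDegree c (y j))
    (i : Fin (p + 1)) (α β : ℕ)
    (hα : α ∈ missing (G.deleteEdges {s(x, y 0)}) G.maxDegree c x)
    (hβ : β ∈ missing (G.deleteEdges {s(x, y 0)}) G.maxDegree c (y i)) :
    Linked (G.deleteEdges {s(x, y 0)}) c α β x (y i) := by
  have hG : ¬ EdgeColorable G G.maxDegree := fun h => by
    have := chromIndex_le h
    omega
  exact ⟨(hadj i).ne,
    reachable_chainGraph_of_multiFan hG hadj hinj hc (fun l _ hl => hfan l hl) hα i hβ,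
    ncard_chainGraph_adj_le_one hc (Or.inl hα), ncard_chainGraph_adj_le_one hc (Or.inr hβ)⟩

/-- with `G` Class 2, `e₁ = x(y 0)` critical, `c` a proper `Δ`-edge-coloring
of `G − e₁` and a multi-fan at `x`: if `α` is missing at `x` and `β` is missing at `y i`,
then `x` and `y i` are `(α,β)`-linked. -/
theorem stmt_7 {V : Type*} [Fintype V] (G : SimpleGraph V) [DecidableRel G.Adj]
    (hclass2 : chromIndex G = G.maxDegree + 1) (x : V) (p : ℕ) (y : Fin (p + 1) → V)
    (hadj : ∀ i, G.Adj x (y i)) (hinj : Function.Injective y)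
    (hcrit : chromIndex (G.deleteEdges {s(x, y 0)}) < chromIndex G)
    (c : Sym2 V → ℕ)
    (hc : IsProperEdgeColoring (G.deleteEdges {s(x, y 0)}) G.maxDegree c)
    (hfan : ∀ i : Fin (p + 1), 0 < (i : ℕ) → ∃ j : Fin (p + 1), (j : ℕ) < (i : ℕ) ∧
      c s(x, y i) ∈ missing (G.deleteEdges {s(x, y 0)}) G.maxDegree c (y j))
    (i : Fin (p + 1)) (α β : ℕ)
    (hα : α ∈ missing (G.deleteEdges {s(x, y 0)}) G.maxDegree c x)
    (hβ : β ∈ missing (G.deleteEdges {s(x, y 0)}) G.maxDegree c (y i)) :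
    Linked (G.deleteEdges {s(x, y 0)}) c α β x (y i) :=
  stmt_7_general G hclass2 x p y hadj hinj c hc hfan i α β hα hβ
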